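/- For the noninteracting case (γ = 0), the Husimi distribution of the canonical ensemble at inverse temperature β for Hamiltonian H = −2J J_x on N bosons is P^{γ=0}_{N,T}(θ̄) = ((ξ−1)/(ξ^{N+1}−1)) · ((1+ξ+(ξ−1)cos θ̄)/2)^N, where ξ = e^{2βJ} and θ̄ is the angle between the Bloch vector of the coherent state and the x-axis. -/

import Mathlib

open scoped BigOperators
noncomputable section

/-- Two-mode bosonic Fock space: coefficients over number basis `|n₁,n₂⟩`. -/
abbrev Fock : Type := (ℕ × ℕ) →₀ ℂ

/-- Annihilation operator of mode 1: `a₁ |n₁,n₂⟩ = √n₁ |n₁-1,n₂⟩`. -/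
def a1 : Module.End ℂ Fock :=
  Finsupp.lsum ℂ fun m => (Real.sqrt m.1 : ℂ) • Finsupp.lsingle (m.1 - 1, m.2)

/-- Annihilation operator of mode 2. -/
def a2 : Module.End ℂ Fock :=
  Finsupp.lsum ℂ fun m => (Real.sqrt m.2 : ℂ) • Finsupp.lsingle (m.1, m.2 - 1)

/-- Creation operator of mode 1: `a₁† |n₁,n₂⟩ = √(n₁+1) |n₁+1,n₂⟩`. -/
def a1d : Module.End ℂ Fock :=
  Finsupp.lsum ℂ fun m => (Real.sqrt (m.1 + 1) : ℂ) • Finsupp.lsingle (m.1 + 1, m.2)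

/-- Creation operator of mode 2. -/
def a2d : Module.End ℂ Fock :=
  Finsupp.lsum ℂ fun m => (Real.sqrt (m.2 + 1) : ℂ) • Finsupp.lsingle (m.1, m.2 + 1)

/-- Pseudo-spin operators. -/
def Jx : Module.End ℂ Fock := (2 : ℂ)⁻¹ • (a1d * a2 + a2d * a1)
def Jy : Module.End ℂ Fock := (2 * Complex.I)⁻¹ • (a1d * a2 - a2d * a1)
def Jz : Module.End ℂ Fock := (2 : ℂ)⁻¹ • (a1d * a1 - a2d * a2)

/-- Total number operator. -/
def numOp : Module.End ℂ Fock := a1d * a1 + a2d * a2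

/-- Vacuum state `|0,0⟩`. -/
def vacuum : Fock := Finsupp.single (0, 0) 1

/-- Inner product on the Fock space (antilinear in the first argument). -/
def finner (f g : Fock) : ℂ := f.sum fun m c => (starRingEnd ℂ) c * g m

/-- Spin coherent state `|Ψ^N_{θ,φ}⟩`. -/
def coherent (N : ℕ) (θ φ : ℝ) : Fock :=
  ((Real.sqrt N.factorial : ℂ))⁻¹ •
    ((((Real.cos (θ / 2) : ℂ)) • a1d
        + (Complex.exp (Complex.I * φ) * (Real.sin (θ / 2) : ℂ)) • a2d) ^ N) vacuum


/-!
Rotating the modes to `b₁ = (a₁ + a₂)/√2`, `b₂ = (a₁ - a₂)/√2` turns `J_x` into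
`(b₁†b₁ - b₂†b₂)/2`, so on the `N`-particle subspace (of dimension `N + 1`) the eigenvectors of
`H = -2J J_x` are, up to a phase, the Dicke states `b₁†ᵏ b₂†ᴺ⁻ᵏ|0⟩ / √(k!(N-k)!)`, with the
simple eigenvalues `J(N - 2k)`. In the rotated modes the coherent state is
`(u b₁† + v b₂†)ᴺ|0⟩ / √N!` with `|u|² = (1 + cos θ̄)/2` and `|v|² = (1 - cos θ̄)/2`, so its
overlap with the `k`-th Dicke state has squared modulus `C(N,k) |u|²ᵏ |v|²⁽ᴺ⁻ᵏ⁾`. Up to a common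
factor the Boltzmann weights are `ξᵏ`; the binomial theorem sums the numerator to
`(ξ|u|² + |v|²)ᴺ` and the geometric series gives the partition function.
-/

open Finsupp

lemma ofReal_sqrt_mul_self {x : ℝ} (hx : 0 ≤ x) : (√x : ℂ) * (√x : ℂ) = x := by
  rw [← Complex.ofReal_mul, Real.mul_self_sqrt hx]

section InnerProduct

lemma finner_single_left (p : ℕ × ℕ) (c : ℂ) (g : Fock) :
    finner (single p c) g = starRingEnd ℂ c * g p := by
  simp [finner, sum_single_index]

lemma finner_zero_left (g : Fock) : finner 0 g = 0 := by
  simp [finner]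

lemma finner_zero_right (f : Fock) : finner f 0 = 0 := by
  simp [finner]

lemma finner_add_left (f f' g : Fock) : finner (f + f') g = finner f g + finner f' g := by
  unfold finner
  rw [sum_add_index] <;> intros <;> simp [add_mul]

lemma finner_add_right (f g g' : Fock) : finner f (g + g') = finner f g + finner f g' := by
  simp [finner, mul_add, sum_add]

lemma finner_smul_left (z : ℂ) (f g : Fock) :
    finner (z • f) g = starRingEnd ℂ z * finner f g := by
  unfold finner
  rw [sum_smul_index' (by simp), mul_sum]
  simp [mul_assoc]

lemma finner_smul_right (z : ℂ) (f g : Fock) : finner f (z • g) = z * finner f g := by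
  simp only [finner, mul_sum, coe_smul, Pi.smul_apply, smul_eq_mul]
  congr 1; ext m c; ring

lemma finner_sum_left {ι : Type*} (s : Finset ι) (f : ι → Fock) (g : Fock) :
    finner (∑ i ∈ s, f i) g = ∑ i ∈ s, finner (f i) g :=
  map_sum (AddMonoidHom.mk' (finner · g) (finner_add_left · · g)) f s

lemma finner_sum_right {ι : Type*} (s : Finset ι) (f : Fock) (g : ι → Fock) :
    finner f (∑ i ∈ s, g i) = ∑ i ∈ s, finner f (g i) :=
  map_sum (AddMonoidHom.mk' (finner f) (finner_add_right f)) g s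

lemma finner_single_right (g : Fock) (p : ℕ × ℕ) (c : ℂ) :
    finner g (single p c) = starRingEnd ℂ (g p) * c := by
  induction g using Finsupp.induction_linear with
  | zero => simp [finner_zero_left]
  | add f f' hf hf' => simp [finner_add_left, hf, hf', add_mul]
  | single q d =>
    rw [finner_single_left, single_apply, single_apply]
    split_ifs <;> simp_all

lemma finner_conj (f g : Fock) : finner f g = starRingEnd ℂ (finner g f) := by
  induction f using Finsupp.induction_linear with
  | zero => simp [finner_zero_left, finner_zero_right]
  | add f f' hf hf' => rw [finner_add_left, finner_add_right, map_add, hf, hf']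
  | single p c => rw [finner_single_left, finner_single_right, map_mul, Complex.conj_conj, mul_comm]

end InnerProduct

section LadderOperators

lemma a1_single (p : ℕ × ℕ) (c : ℂ) :
    a1 (single p c) = (√(p.1 : ℝ) : ℂ) • single (p.1 - 1, p.2) c := by
  simp [a1]

lemma a2_single (p : ℕ × ℕ) (c : ℂ) :
    a2 (single p c) = (√(p.2 : ℝ) : ℂ) • single (p.1, p.2 - 1) c := by
  simp [a2]

lemma a1d_single (p : ℕ × ℕ) (c : ℂ) :
    a1d (single p c) = (√((p.1 : ℝ) + 1) : ℂ) • single (p.1 + 1, p.2) c := by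
  simp [a1d]

lemma a2d_single (p : ℕ × ℕ) (c : ℂ) :
    a2d (single p c) = (√((p.2 : ℝ) + 1) : ℂ) • single (p.1, p.2 + 1) c := by
  simp [a2d]

lemma a1_apply (g : Fock) (m : ℕ × ℕ) :
    a1 g m = (√((m.1 : ℝ) + 1) : ℂ) * g (m.1 + 1, m.2) := by
  induction g using Finsupp.induction_linear with
  | zero => simp
  | add f g hf hg => simp [hf, hg, mul_add]
  | single p c =>
    obtain ⟨_ | p1, p2⟩ := p
    · simp [a1_single]
    · simp only [a1_single, single_apply, coe_smul, Pi.smul_apply, smul_eq_mul, Prod.ext_iff]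
      split_ifs <;> simp_all

lemma a2_apply (g : Fock) (m : ℕ × ℕ) :
    a2 g m = (√((m.2 : ℝ) + 1) : ℂ) * g (m.1, m.2 + 1) := by
  induction g using Finsupp.induction_linear with
  | zero => simp
  | add f g hf hg => simp [hf, hg, mul_add]
  | single p c =>
    obtain ⟨p1, _ | p2⟩ := p
    · simp [a2_single]
    · simp only [a2_single, single_apply, coe_smul, Pi.smul_apply, smul_eq_mul, Prod.ext_iff]
      split_ifs <;> simp_all

lemma finner_a1d_left (f g : Fock) : finner (a1d f) g = finner f (a1 g) := by
  induction f using Finsupp.induction_linear with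
  | zero => simp [finner_zero_left]
  | add f f' hf hf' => rw [map_add, finner_add_left, finner_add_left, hf, hf']
  | single p c =>
    rw [a1d_single, finner_smul_left, finner_single_left, finner_single_left, a1_apply,
      Complex.conj_ofReal]
    ring

lemma finner_a2d_left (f g : Fock) : finner (a2d f) g = finner f (a2 g) := by
  induction f using Finsupp.induction_linear with
  | zero => simp [finner_zero_left]
  | add f f' hf hf' => rw [map_add, finner_add_left, finner_add_left, hf, hf']
  | single p c =>
    rw [a2d_single, finner_smul_left, finner_single_left, finner_single_left, a2_apply,
      Complex.conj_ofReal]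
    ring

lemma a1d_a1_single (p : ℕ × ℕ) (c : ℂ) :
    a1d (a1 (single p c)) = (p.1 : ℂ) • single p c := by
  obtain ⟨_ | p1, p2⟩ := p
  · simp [a1_single]
  · simp only [a1_single, map_smul, a1d_single, smul_smul, Nat.add_sub_cancel]
    push_cast
    rw [ofReal_sqrt_mul_self (by positivity)]
    push_cast
    rfl

lemma a2d_a2_single (p : ℕ × ℕ) (c : ℂ) :
    a2d (a2 (single p c)) = (p.2 : ℂ) • single p c := by
  obtain ⟨p1, _ | p2⟩ := p
  · simp [a2_single]
  · simp only [a2_single, map_smul, a2d_single, smul_smul, Nat.add_sub_cancel]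
    push_cast
    rw [ofReal_sqrt_mul_self (by positivity)]
    push_cast
    rfl

lemma numOp_single (p : ℕ × ℕ) (c : ℂ) :
    numOp (single p c) = ((p.1 + p.2 : ℕ) : ℂ) • single p c := by
  rw [numOp, LinearMap.add_apply, Module.End.mul_apply, Module.End.mul_apply, a1d_a1_single,
    a2d_a2_single, Nat.cast_add, add_smul]

lemma numOp_apply (g : Fock) (m : ℕ × ℕ) : numOp g m = ((m.1 + m.2 : ℕ) : ℂ) * g m := by
  induction g using Finsupp.induction_linear with
  | zero => simp
  | add f g hf hg => simp [hf, hg, mul_add]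
  | single p c =>
    rw [numOp_single, coe_smul, Pi.smul_apply, smul_eq_mul, single_apply]
    split_ifs with h <;> simp [h]

lemma a1_a1d_single (p : ℕ × ℕ) (c : ℂ) :
    a1 (a1d (single p c)) = ((p.1 : ℂ) + 1) • single p c := by
  rw [a1d_single, map_smul, a1_single, smul_smul, Nat.add_sub_cancel, Nat.cast_add_one,
    ofReal_sqrt_mul_self (by positivity)]
  push_cast
  rfl

lemma a2_a2d_single (p : ℕ × ℕ) (c : ℂ) :
    a2 (a2d (single p c)) = ((p.2 : ℂ) + 1) • single p c := by
  rw [a2d_single, map_smul, a2_single, smul_smul, Nat.add_sub_cancel, Nat.cast_add_one,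
    ofReal_sqrt_mul_self (by positivity)]
  push_cast
  rfl

lemma a1_mul_a1d : a1 * a1d = a1d * a1 + 1 := by
  refine lhom_ext fun p c => ?_
  simp only [LinearMap.add_apply, Module.End.mul_apply, Module.End.one_apply, a1_a1d_single,
    a1d_a1_single, add_smul, one_smul]

lemma a2_mul_a2d : a2 * a2d = a2d * a2 + 1 := by
  refine lhom_ext fun p c => ?_
  simp only [LinearMap.add_apply, Module.End.mul_apply, Module.End.one_apply, a2_a2d_single,
    a2d_a2_single, add_smul, one_smul]

lemma a1_mul_a2d : a1 * a2d = a2d * a1 := by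
  refine lhom_ext fun p c => ?_
  simp only [Module.End.mul_apply, a1_single, a2d_single, map_smul, smul_smul, mul_comm]

lemma a2_mul_a1d : a2 * a1d = a1d * a2 := by
  refine lhom_ext fun p c => ?_
  simp only [Module.End.mul_apply, a2_single, a1d_single, map_smul, smul_smul, mul_comm]

lemma a1d_mul_a2d : a1d * a2d = a2d * a1d := by
  refine lhom_ext fun p c => ?_
  simp only [Module.End.mul_apply, a1d_single, a2d_single, map_smul, smul_smul, mul_comm]

end LadderOperators

section RotatedModes

-- `Fock` carries the additive monoid structure of `Finsupp`, so `Module.End ℂ Fock` is only a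
-- semiring here: differences of operators are written with `(-1 : ℂ) •`.
def b1 : Module.End ℂ Fock := (√2 : ℂ)⁻¹ • (a1 + a2)
def b2 : Module.End ℂ Fock := (√2 : ℂ)⁻¹ • (a1 + (-1 : ℂ) • a2)
def b1d : Module.End ℂ Fock := (√2 : ℂ)⁻¹ • (a1d + a2d)
def b2d : Module.End ℂ Fock := (√2 : ℂ)⁻¹ • (a1d + (-1 : ℂ) • a2d)

lemma inv_sqrt_two_smul_mul_smul (P Q : Module.End ℂ Fock) :
    (√2 : ℂ)⁻¹ • P * (√2 : ℂ)⁻¹ • Q = (2 : ℂ)⁻¹ • (P * Q) := by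
  rw [smul_mul_smul_comm, ← mul_inv, ofReal_sqrt_mul_self zero_le_two, Complex.ofReal_ofNat]

lemma b1_mul_b1d : b1 * b1d = b1d * b1 + 1 := by
  rw [b1, b1d, inv_sqrt_two_smul_mul_smul, inv_sqrt_two_smul_mul_smul]
  simp only [add_mul, mul_add, a1_mul_a1d, a2_mul_a2d, a1_mul_a2d, a2_mul_a1d]
  module

lemma b2_mul_b2d : b2 * b2d = b2d * b2 + 1 := by
  rw [b2, b2d, inv_sqrt_two_smul_mul_smul, inv_sqrt_two_smul_mul_smul]
  simp only [add_mul, mul_add, smul_mul_assoc, mul_smul_comm, a1_mul_a1d, a2_mul_a2d,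
    a1_mul_a2d, a2_mul_a1d]
  module

lemma b1_mul_b2d : b1 * b2d = b2d * b1 := by
  rw [b1, b2d, inv_sqrt_two_smul_mul_smul, inv_sqrt_two_smul_mul_smul]
  simp only [add_mul, mul_add, smul_mul_assoc, mul_smul_comm, a1_mul_a1d, a2_mul_a2d,
    a1_mul_a2d, a2_mul_a1d]
  module

lemma b2_mul_b1d : b2 * b1d = b1d * b2 := by
  rw [b2, b1d, inv_sqrt_two_smul_mul_smul, inv_sqrt_two_smul_mul_smul]
  simp only [add_mul, mul_add, smul_mul_assoc, mul_smul_comm, a1_mul_a1d, a2_mul_a2d,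
    a1_mul_a2d, a2_mul_a1d]
  module

lemma b1d_mul_b2d : b1d * b2d = b2d * b1d := by
  rw [b1d, b2d, inv_sqrt_two_smul_mul_smul, inv_sqrt_two_smul_mul_smul]
  simp only [add_mul, mul_add, smul_mul_assoc, mul_smul_comm, a1d_mul_a2d]
  module

lemma Jx_eq_b : Jx = (2 : ℂ)⁻¹ • (b1d * b1 + (-1 : ℂ) • (b2d * b2)) := by
  rw [Jx, b1, b2, b1d, b2d, inv_sqrt_two_smul_mul_smul, inv_sqrt_two_smul_mul_smul]
  simp only [add_mul, mul_add, smul_mul_assoc, mul_smul_comm]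
  module

lemma numOp_eq_b : numOp = b1d * b1 + b2d * b2 := by
  rw [numOp, b1, b2, b1d, b2d, inv_sqrt_two_smul_mul_smul, inv_sqrt_two_smul_mul_smul]
  simp only [add_mul, mul_add, smul_mul_assoc, mul_smul_comm]
  module

lemma finner_b1d_left (f g : Fock) : finner (b1d f) g = finner f (b1 g) := by
  simp only [b1, b1d, LinearMap.smul_apply, LinearMap.add_apply, finner_smul_left,
    finner_smul_right, finner_add_left, finner_add_right, finner_a1d_left, finner_a2d_left,
    map_inv₀, Complex.conj_ofReal]

lemma finner_b2d_left (f g : Fock) : finner (b2d f) g = finner f (b2 g) := by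
  simp only [b2, b2d, LinearMap.smul_apply, LinearMap.add_apply, finner_smul_left,
    finner_smul_right, finner_add_left, finner_add_right, finner_a1d_left, finner_a2d_left,
    map_inv₀, Complex.conj_ofReal, map_neg, map_one]

lemma b1_vacuum : b1 vacuum = 0 := by
  simp [b1, vacuum, a1_single, a2_single]

lemma b2_vacuum : b2 vacuum = 0 := by
  simp [b2, vacuum, a1_single, a2_single]

end RotatedModes

lemma mul_pow_succ_of_mul_eq_add_one {R : Type*} [Semiring R] {A B : R}
    (h : B * A = A * B + 1) (k : ℕ) :
    B * A ^ (k + 1) = A ^ (k + 1) * B + (k + 1) • A ^ k := by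
  induction k with
  | zero => simpa using h
  | succ k ih =>
    rw [pow_succ A (k + 1), ← mul_assoc, ih, add_mul, mul_assoc, h, smul_mul_assoc, ← pow_succ]
    simp only [mul_add, mul_one, ← mul_assoc, ← pow_succ, succ_nsmul _ (k + 1)]
    abel

section LadderStates

variable {A B : Module.End ℂ Fock}

lemma apply_pow_succ_of_mul_eq_add_one (h : B * A = A * B + 1) {v : Fock} (hv : B v = 0)
    (k : ℕ) : B ((A ^ (k + 1)) v) = ((k : ℂ) + 1) • (A ^ k) v := by
  have := congrArg (· v) (mul_pow_succ_of_mul_eq_add_one h k)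
  simpa [hv, ← Nat.cast_smul_eq_nsmul ℂ] using this

lemma finner_pow_apply_pow_apply (hadj : ∀ f g, finner (A f) g = finner f (B g))
    (h : B * A = A * B + 1) {x y : Fock} (hx : B x = 0) (hy : B y = 0) (k k' : ℕ) :
    finner ((A ^ k) x) ((A ^ k') y) = if k = k' then (k.factorial : ℂ) * finner x y else 0 := by
  have hadj' : ∀ f g, finner f (A g) = finner (B f) g := fun f g => by
    rw [finner_conj, hadj, ← finner_conj]
  induction k generalizing k' with
  | zero =>
    cases k' with
    | zero => simp
    | succ k' => simp [pow_succ', hadj', hx, finner_zero_left]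
  | succ k ih =>
    rw [pow_succ', Module.End.mul_apply, hadj]
    cases k' with
    | zero => simp [hy, finner_zero_right]
    | succ k' =>
      rw [apply_pow_succ_of_mul_eq_add_one h hy, finner_smul_right, ih]
      by_cases hkk : k = k'
      · subst hkk
        rw [if_pos rfl, if_pos rfl, Nat.factorial_succ]
        push_cast
        ring
      · simp [hkk]

lemma apply_apply_pow_of_mul_eq_add_one (h : B * A = A * B + 1) {v : Fock} (hv : B v = 0)
    (k : ℕ) : A (B ((A ^ k) v)) = (k : ℂ) • (A ^ k) v := by
  cases k with
  | zero => simp [hv]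
  | succ k => rw [apply_pow_succ_of_mul_eq_add_one h hv, map_smul, ← Module.End.mul_apply,
      ← pow_succ', Nat.cast_succ]

end LadderStates

section BStates

def bState (k l : ℕ) : Fock := (b1d ^ k) ((b2d ^ l) vacuum)

lemma b1_b2d_pow_vacuum (l : ℕ) : b1 ((b2d ^ l) vacuum) = 0 := by
  rw [← Module.End.mul_apply, ((Commute.pow_right b1_mul_b2d l) : _ = _), Module.End.mul_apply,
    b1_vacuum, map_zero]

lemma finner_vacuum_vacuum : finner vacuum vacuum = 1 := by
  simp [vacuum, finner_single_left]

lemma finner_bState (k l k' l' : ℕ) :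
    finner (bState k l) (bState k' l')
      = if k = k' ∧ l = l' then ((k.factorial * l.factorial : ℕ) : ℂ) else 0 := by
  rw [bState, bState, finner_pow_apply_pow_apply finner_b1d_left b1_mul_b1d
      (b1_b2d_pow_vacuum l) (b1_b2d_pow_vacuum l'),
    finner_pow_apply_pow_apply finner_b2d_left b2_mul_b2d b2_vacuum b2_vacuum,
    finner_vacuum_vacuum]
  by_cases hk : k = k' <;> by_cases hl : l = l' <;> simp [hk, hl]

lemma b1d_b1_bState (k l : ℕ) : b1d (b1 (bState k l)) = (k : ℂ) • bState k l :=
  apply_apply_pow_of_mul_eq_add_one b1_mul_b1d (b1_b2d_pow_vacuum l) k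

lemma b2d_b2_bState (k l : ℕ) : b2d (b2 (bState k l)) = (l : ℂ) • bState k l := by
  rw [bState, ← Module.End.mul_apply b2, ((Commute.pow_right b2_mul_b1d k) : _ = _),
    Module.End.mul_apply, ← Module.End.mul_apply b2d,
    ((Commute.pow_right b1d_mul_b2d.symm k) : _ = _), Module.End.mul_apply,
    apply_apply_pow_of_mul_eq_add_one b2_mul_b2d b2_vacuum, map_smul]

lemma Jx_bState (k l : ℕ) : Jx (bState k l) = (((k : ℂ) - l) / 2) • bState k l := by
  rw [Jx_eq_b]
  simp only [LinearMap.smul_apply, LinearMap.add_apply, Module.End.mul_apply, b1d_b1_bState,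
    b2d_b2_bState]
  module

lemma numOp_bState (k l : ℕ) : numOp (bState k l) = ((k + l : ℕ) : ℂ) • bState k l := by
  rw [numOp_eq_b, LinearMap.add_apply, Module.End.mul_apply, Module.End.mul_apply,
    b1d_b1_bState, b2d_b2_bState, Nat.cast_add, add_smul]

end BStates

section DickeBasis

variable (N : ℕ)

def dickeX (k : Fin (N + 1)) : Fock :=
  (√((k.1.factorial * (N - k.1).factorial : ℕ) : ℝ) : ℂ)⁻¹ • bState k (N - k)

lemma finner_dickeX (k j : Fin (N + 1)) :
    finner (dickeX N k) (dickeX N j) = if k = j then 1 else 0 := by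
  rw [dickeX, dickeX, finner_smul_left, finner_smul_right, finner_bState, map_inv₀,
    Complex.conj_ofReal]
  by_cases h : k = j
  · subst h
    have hpos : (0 : ℝ) < (k.1.factorial * (N - k.1).factorial : ℕ) := by positivity
    have hsq := ofReal_sqrt_mul_self hpos.le
    have hne : (√((k.1.factorial * (N - k.1).factorial : ℕ) : ℝ) : ℂ) ≠ 0 := by
      exact_mod_cast (Real.sqrt_pos.2 hpos).ne'
    rw [if_pos ⟨rfl, rfl⟩, if_pos rfl, ← Complex.ofReal_natCast, ← hsq]
    field_simp
  · rw [if_neg fun h' => h (Fin.ext h'.1), if_neg h, mul_zero, mul_zero]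

lemma Jx_dickeX (k : Fin (N + 1)) : Jx (dickeX N k) = ((k : ℂ) - N / 2) • dickeX N k := by
  rw [dickeX, map_smul, Jx_bState, smul_comm, Nat.cast_sub k.is_le]
  congr 1
  ring

lemma numOp_dickeX (k : Fin (N + 1)) : numOp (dickeX N k) = (N : ℂ) • dickeX N k := by
  rw [dickeX, map_smul, numOp_bState, Nat.add_sub_cancel' k.is_le, smul_comm]

lemma linearIndependent_dickeX : LinearIndependent ℂ (dickeX N) := by
  rw [linearIndependent_iff']
  intro s g hsum i hi
  have h := congrArg (finner (dickeX N i)) hsum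
  simp only [finner_zero_right, finner_sum_right, finner_smul_right, finner_dickeX, mul_ite,
    mul_one, mul_zero, Finset.sum_ite_eq, if_pos hi] at h
  exact h

end DickeBasis

section NParticle

variable (N : ℕ)

def nParticleSubspace : Submodule ℂ Fock :=
  Submodule.span ℂ (Set.range fun j : Fin (N + 1) => single (j.1, N - j.1) (1 : ℂ))

variable {N}

lemma mem_nParticleSubspace {g : Fock} (hg : numOp g = (N : ℂ) • g) :
    g ∈ nParticleSubspace N := by
  have hsupp : ∀ m ∈ g.support, m.1 + m.2 = N := fun m hm => by
    have h := congrArg (· m) hg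
    simp only [numOp_apply, coe_smul, Pi.smul_apply, smul_eq_mul] at h
    exact_mod_cast mul_right_cancel₀ (mem_support_iff.1 hm) h
  rw [← g.sum_single]
  refine Submodule.sum_mem _ fun m hm => ?_
  rw [← mul_one (g m), ← smul_eq_mul, ← smul_single]
  refine Submodule.smul_mem _ _ (Submodule.subset_span ⟨⟨m.1, by grind⟩, ?_⟩)
  simp only [← hsupp m hm, Nat.add_sub_cancel_left]

lemma span_dickeX : Submodule.span ℂ (Set.range (dickeX N)) = nParticleSubspace N := by
  have : FiniteDimensional ℂ (nParticleSubspace N) :=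
    FiniteDimensional.span_of_finite ℂ (Set.finite_range _)
  refine Submodule.eq_of_le_of_finrank_le ?_ ?_
  · rw [Submodule.span_le, Set.range_subset_iff]
    exact fun k => mem_nParticleSubspace (numOp_dickeX N k)
  · rw [finrank_span_eq_card (linearIndependent_dickeX N), Fintype.card_fin]
    exact (finrank_range_le_card (R := ℂ) _).trans_eq (Fintype.card_fin _)

lemma exists_sum_dickeX_eq {g : Fock} (hg : numOp g = (N : ℂ) • g) :
    ∃ c : Fin (N + 1) → ℂ, ∑ k, c k • dickeX N k = g := by
  rw [← Submodule.mem_span_range_iff_exists_fun, span_dickeX]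
  exact mem_nParticleSubspace hg

end NParticle

section Eigenvectors

variable {N : ℕ}

lemma finner_dickeX_sum (j : Fin (N + 1)) (d : Fin (N + 1) → ℂ) :
    finner (dickeX N j) (∑ k, d k • dickeX N k) = d j := by
  simp [finner_sum_right, finner_smul_right, finner_dickeX]

lemma exists_eq_smul_dickeX {f : Fock} {μ : ℂ} (hN : numOp f = (N : ℂ) • f)
    (hnorm : finner f f = 1) (hJx : Jx f = μ • f) :
    ∃ (k : Fin (N + 1)) (z : ℂ), f = z • dickeX N k ∧ Complex.normSq z = 1
      ∧ μ = (k : ℂ) - N / 2 := by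
  obtain ⟨c, rfl⟩ := exists_sum_dickeX_eq hN
  have hcoef : ∀ j, c j * ((j : ℂ) - N / 2) = μ * c j := fun j => by
    have h := congrArg (finner (dickeX N j)) hJx
    simp only [map_sum, map_smul, Jx_dickeX, smul_smul, Finset.smul_sum] at h
    rwa [finner_dickeX_sum, finner_dickeX_sum] at h
  have hsum : ∑ j, starRingEnd ℂ (c j) * c j = 1 := by
    simpa [finner_sum_left, finner_smul_left, finner_dickeX_sum] using hnorm
  obtain ⟨k, -, hk⟩ := Finset.exists_ne_zero_of_sum_ne_zero (hsum ▸ one_ne_zero)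
  have hck : c k ≠ 0 := fun h => hk (by rw [h, mul_zero])
  have hμ : μ = (k : ℂ) - N / 2 :=
    (mul_left_cancel₀ hck (by rw [hcoef k, mul_comm])).symm
  -- the eigenvalues `j - N/2` are pairwise distinct, so only the `k`-th coefficient survives
  have hc : ∀ j ≠ k, c j = 0 := fun j hj => by
    have h : c j * ((j : ℂ) - k) = 0 := by linear_combination hcoef j + c j * hμ
    refine (mul_eq_zero.1 h).resolve_right fun h' => hj (Fin.ext ?_)
    exact_mod_cast sub_eq_zero.1 h'
  have hf : ∑ j, c j • dickeX N j = c k • dickeX N k :=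
    Finset.sum_eq_single k (fun j _ hj => by rw [hc j hj, zero_smul]) (by simp)
  refine ⟨k, c k, hf, ?_, hμ⟩
  rw [Finset.sum_eq_single k (fun j _ hj => by rw [hc j hj, mul_zero]) (by simp)] at hsum
  exact_mod_cast (Complex.normSq_eq_conj_mul_self ▸ hsum)

lemma exists_equiv_dickeX {c : ℂ} (hc : c ≠ 0) {E : Fin (N + 1) → ℝ} {Φ : Fin (N + 1) → Fock}
    (hΦN : ∀ i, numOp (Φ i) = (N : ℂ) • Φ i)
    (hortho : ∀ i j, finner (Φ i) (Φ j) = if i = j then 1 else 0)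
    (heig : ∀ i, (c • Jx) (Φ i) = (E i : ℂ) • Φ i) :
    ∃ e : Fin (N + 1) ≃ Fin (N + 1), ∀ i, (E i : ℂ) = c * ((e i : ℂ) - N / 2)
      ∧ ∀ ψ, Complex.normSq (finner ψ (Φ i)) = Complex.normSq (finner ψ (dickeX N (e i))) := by
  have hJx : ∀ i, Jx (Φ i) = (E i / c : ℂ) • Φ i := fun i => by
    rw [div_eq_inv_mul, ← smul_smul, ← heig, LinearMap.smul_apply, inv_smul_smul₀ hc]
  choose σ z hΦ hz hE using fun i =>
    exists_eq_smul_dickeX (hΦN i) (by simp [hortho]) (hJx i)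
  have hσ : Function.Injective σ := fun i j hij => by
    by_contra hne
    have h := hortho i j
    rw [if_neg hne, hΦ i, hΦ j, finner_smul_left, finner_smul_right, hij, finner_dickeX,
      if_pos rfl, mul_one] at h
    have := congrArg Complex.normSq h
    simp [hz] at this
  refine ⟨Equiv.ofBijective σ hσ.bijective_of_finite, fun i => ⟨?_, fun ψ => ?_⟩⟩
  · rw [Equiv.ofBijective_apply, ← hE i]
    field_simp
  · rw [Equiv.ofBijective_apply, hΦ i, finner_smul_right, Complex.normSq_mul, hz, one_mul]

end Eigenvectors

section CoherentState

def ampB1 (θ φ : ℝ) : ℂ :=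
  (√2 : ℂ)⁻¹ * (Real.cos (θ / 2) + Complex.exp (Complex.I * φ) * Real.sin (θ / 2))

def ampB2 (θ φ : ℝ) : ℂ :=
  (√2 : ℂ)⁻¹ * (Real.cos (θ / 2) - Complex.exp (Complex.I * φ) * Real.sin (θ / 2))

lemma smul_a1d_add_smul_a2d (α β : ℂ) :
    α • a1d + β • a2d = ((√2 : ℂ)⁻¹ * (α + β)) • b1d + ((√2 : ℂ)⁻¹ * (α - β)) • b2d := by
  have hsq : (√2 : ℂ) * √2 = 2 := by
    rw [ofReal_sqrt_mul_self zero_le_two, Complex.ofReal_ofNat]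
  have hne : (√2 : ℂ) ≠ 0 := by exact_mod_cast Real.sqrt_ne_zero'.2 two_pos
  rw [b1d, b2d, smul_smul, smul_smul]
  match_scalars <;> field_simp
  · linear_combination α * hsq
  · linear_combination β * hsq

lemma coherent_eq_sum (N : ℕ) (θ φ : ℝ) :
    coherent N θ φ = (√(N.factorial : ℝ) : ℂ)⁻¹ • ∑ k ∈ Finset.range (N + 1),
      (ampB1 θ φ ^ k * ampB2 θ φ ^ (N - k) * N.choose k) • bState k (N - k) := by
  have hcomm : Commute (ampB1 θ φ • b1d) (ampB2 θ φ • b2d) :=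
    ((show Commute b1d b2d from b1d_mul_b2d).smul_left _).smul_right _
  rw [coherent, smul_a1d_add_smul_a2d, ← ampB1, ← ampB2, hcomm.add_pow, LinearMap.sum_apply]
  congr 1
  refine Finset.sum_congr rfl fun k _ => ?_
  rw [smul_pow, smul_pow, smul_mul_smul_comm, Module.End.mul_apply, Module.End.natCast_apply,
    ← Nat.cast_smul_eq_nsmul ℂ, map_smul, LinearMap.smul_apply, smul_smul, bState,
    Module.End.mul_apply]
  congr 1
  ring

lemma normSq_inv_sqrt_two : Complex.normSq (√2 : ℂ)⁻¹ = 1 / 2 := by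
  rw [map_inv₀, Complex.normSq_ofReal, Real.mul_self_sqrt zero_le_two, one_div]

lemma normSq_ampB1 (θ φ : ℝ) :
    Complex.normSq (ampB1 θ φ) = (1 + Real.sin θ * Real.cos φ) / 2 := by
  have h : (Real.cos (θ / 2) : ℂ) + Complex.exp (Complex.I * φ) * Real.sin (θ / 2)
      = ((Real.cos (θ / 2) + Real.cos φ * Real.sin (θ / 2) : ℝ) : ℂ)
        + ((Real.sin φ * Real.sin (θ / 2) : ℝ) : ℂ) * Complex.I := by
    rw [mul_comm Complex.I, Complex.exp_mul_I, ← Complex.ofReal_cos, ← Complex.ofReal_sin]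
    push_cast
    ring
  rw [ampB1, Complex.normSq_mul, normSq_inv_sqrt_two, h, Complex.normSq_add_mul_I]
  have hθ : Real.sin θ = 2 * Real.sin (θ / 2) * Real.cos (θ / 2) := by
    rw [← Real.sin_two_mul, mul_div_cancel₀ θ two_ne_zero]
  linear_combination (1 / 2) * Real.sin_sq_add_cos_sq (θ / 2)
    + (Real.sin (θ / 2) ^ 2 / 2) * Real.sin_sq_add_cos_sq φ - (Real.cos φ / 2) * hθ

lemma normSq_ampB2 (θ φ : ℝ) :
    Complex.normSq (ampB2 θ φ) = (1 - Real.sin θ * Real.cos φ) / 2 := by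
  have h : (Real.cos (θ / 2) : ℂ) - Complex.exp (Complex.I * φ) * Real.sin (θ / 2)
      = ((Real.cos (θ / 2) - Real.cos φ * Real.sin (θ / 2) : ℝ) : ℂ)
        + ((-(Real.sin φ * Real.sin (θ / 2)) : ℝ) : ℂ) * Complex.I := by
    rw [mul_comm Complex.I, Complex.exp_mul_I, ← Complex.ofReal_cos, ← Complex.ofReal_sin]
    push_cast
    ring
  rw [ampB2, Complex.normSq_mul, normSq_inv_sqrt_two, h, Complex.normSq_add_mul_I]
  have hθ : Real.sin θ = 2 * Real.sin (θ / 2) * Real.cos (θ / 2) := by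
    rw [← Real.sin_two_mul, mul_div_cancel₀ θ two_ne_zero]
  linear_combination (1 / 2) * Real.sin_sq_add_cos_sq (θ / 2)
    + (Real.sin (θ / 2) ^ 2 / 2) * Real.sin_sq_add_cos_sq φ + (Real.cos φ / 2) * hθ

lemma finner_bState_coherent (N : ℕ) (θ φ : ℝ) {k : ℕ} (hk : k ≤ N) :
    finner (bState k (N - k)) (coherent N θ φ)
      = (√(N.factorial : ℝ) : ℂ)⁻¹ * (ampB1 θ φ ^ k * ampB2 θ φ ^ (N - k) * N.choose k)
        * ((k.factorial * (N - k).factorial : ℕ) : ℂ) := by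
  have hother : ∀ j ∈ Finset.range (N + 1), j ≠ k → finner (bState k (N - k))
      ((ampB1 θ φ ^ j * ampB2 θ φ ^ (N - j) * N.choose j) • bState j (N - j)) = 0 :=
    fun j _ hj => by rw [finner_smul_right, finner_bState, if_neg fun h => hj h.1.symm, mul_zero]
  rw [coherent_eq_sum, finner_smul_right, finner_sum_right,
    Finset.sum_eq_single_of_mem k (Finset.mem_range.2 (Nat.lt_succ_of_le hk)) hother,
    finner_smul_right, finner_bState, if_pos ⟨rfl, rfl⟩]
  ring

lemma normSq_finner_coherent_dickeX (N : ℕ) (θ φ : ℝ) (k : Fin (N + 1)) :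
    Complex.normSq (finner (coherent N θ φ) (dickeX N k))
      = N.choose k * ((1 + Real.sin θ * Real.cos φ) / 2) ^ (k : ℕ)
        * ((1 - Real.sin θ * Real.cos φ) / 2) ^ (N - k) := by
  rw [dickeX, finner_smul_right, finner_conj, finner_bState_coherent N θ φ k.is_le]
  simp only [Complex.normSq_mul, Complex.normSq_conj, map_pow, map_inv₀, Complex.normSq_ofReal,
    Complex.normSq_natCast, normSq_ampB1, normSq_ampB2]
  rw [Real.mul_self_sqrt (by positivity), Real.mul_self_sqrt (by positivity)]
  have hfact := Nat.choose_mul_factorial_mul_factorial k.is_le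
  have : (k.1.factorial : ℝ) ≠ 0 := by positivity
  have : ((N - k.1).factorial : ℝ) ≠ 0 := by positivity
  rw [← hfact]
  push_cast
  field_simp

end CoherentState

lemma sum_pow_mul_binomial_div_geom_sum {ξ : ℝ} (hξ : ξ ≠ 1) (a b : ℝ) (N : ℕ) :
    (∑ k : Fin (N + 1), ξ ^ (k : ℕ) * (N.choose k * a ^ (k : ℕ) * b ^ (N - k)))
        / ∑ k : Fin (N + 1), ξ ^ (k : ℕ)
      = (ξ - 1) / (ξ ^ (N + 1) - 1) * (ξ * a + b) ^ N := by
  have hnum : ∑ k ∈ Finset.range (N + 1), ξ ^ k * (N.choose k * a ^ k * b ^ (N - k))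
      = (ξ * a + b) ^ N := by
    rw [add_pow]
    exact Finset.sum_congr rfl fun k _ => by ring
  rw [Fin.sum_univ_eq_sum_range (fun k => ξ ^ k * (N.choose k * a ^ k * b ^ (N - k))),
    Fin.sum_univ_eq_sum_range (ξ ^ ·), hnum, geom_sum_eq hξ, div_div_eq_mul_div]
  ring

/-- closed form of the Husimi distribution of the canonical
ensemble for the noninteracting Hamiltonian `H = -2J Jx`.  Here
`(E i, Φ i)` is any orthonormal eigenbasis of `H` on the N-particle subspace,
`ξ = e^{2βJ}`, and `cos θ̄ = sinθ cosφ` is the cosine of the angle between the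
Bloch vector of `|Ψ^N_{θ,φ}⟩` and the x-axis. -/
theorem husimi_noninteracting (N : ℕ) (J β : ℝ) (hβJ : β * J ≠ 0) (θ φ : ℝ)
    (E : Fin (N + 1) → ℝ) (Φ : Fin (N + 1) → Fock)
    (hΦN : ∀ i, numOp (Φ i) = (N : ℂ) • Φ i)
    (hortho : ∀ i j, finner (Φ i) (Φ j) = if i = j then 1 else 0)
    (heig : ∀ i, ((-(2 * J) : ℂ) • Jx) (Φ i) = (E i : ℂ) • Φ i) :
    (∑ i, Real.exp (-β * E i)
        * Complex.normSq (finner (coherent N θ φ) (Φ i)))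
      / (∑ i, Real.exp (-β * E i))
    = ((Real.exp (2 * β * J) - 1) / (Real.exp (2 * β * J) ^ (N + 1) - 1))
        * ((1 + Real.exp (2 * β * J)
            + (Real.exp (2 * β * J) - 1) * (Real.sin θ * Real.cos φ)) / 2) ^ N := by
  have hJ : (-(2 * J) : ℂ) ≠ 0 := by simpa using right_ne_zero_of_mul hβJ
  obtain ⟨e, he⟩ := exists_equiv_dickeX hJ hΦN hortho heig
  set ξ := Real.exp (2 * β * J)
  have hξ : ξ ≠ 1 := fun h => hβJ (by linarith [Real.exp_eq_one_iff _ |>.1 h])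
  have hweight : ∀ i, Real.exp (-β * E i) = Real.exp (-(β * J * N)) * ξ ^ (e i : ℕ) := by
    intro i
    have hE : E i = -(2 * J) * ((e i : ℝ) - N / 2) := Complex.ofReal_injective <| by
      rw [(he i).1]
      push_cast
      ring
    rw [hE, ← Real.exp_nat_mul, ← Real.exp_add]
    congr 1
    ring
  simp only [hweight, (he _).2, mul_assoc, ← Finset.mul_sum]
  rw [mul_div_mul_left _ _ (Real.exp_pos _).ne',
    Equiv.sum_comp e fun k => ξ ^ (k : ℕ) * Complex.normSq (finner (coherent N θ φ) (dickeX N k)),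
    Equiv.sum_comp e fun k => ξ ^ (k : ℕ)]
  simp only [normSq_finner_coherent_dickeX]
  rw [sum_pow_mul_binomial_div_geom_sum hξ]
  ring
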